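/- As j → ∞, | ∫_ℝ ∫_ℝ |ψ̂(2^{j₂(j)} λ₂)|² · ψ̂(2^j λ₁) · ψ̂(2^j(λ₁−λ₂)) · (f_{c,j})^{⋆2}(λ₁) · (f_{c,j})^{⋆2}(λ₁−λ₂) dλ₂ dλ₁ | = O(2^{j(1−2β)} · 2^{−j₂(j)}), where (f_{c,j})^{⋆2} = f_{c,j} ⋆ f_{c,j} is the (two-fold) convolution of the complex-valued function f_{c,j} with itself. -/

import Mathlib

open MeasureTheory Filter

/-- Convolution of two complex-valued functions on ℝ. -/
noncomputable def convC (f g : ℝ → ℂ) (x : ℝ) : ℂ := ∫ y : ℝ, f (x - y) * g y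

/-- Fourier transform `ψ̂(λ) = ∫ e^{-iλt} ψ(t) dt`. -/
noncomputable def fhat (ψ : ℝ → ℝ) (l : ℝ) : ℂ :=
  ∫ t : ℝ, Complex.exp (-(Complex.I * (l : ℂ) * (t : ℂ))) * (ψ t : ℂ)

/-!
Write `a = 2 ^ j`, `b = 2 ^ j₂(j)` and `g = f_{c,j}`. Pointwise, the integrand is at most
`‖ψ̂(bλ₂)‖² ‖ψ̂(aλ₁)‖ · sup ‖ψ̂‖ · ‖g ⋆ g‖_∞²`, and `‖g ⋆ g‖_∞ ≤ ‖g‖₂²` by AM–GM under the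
integral. Rescaling gives `∫ ‖ψ̂(a·)‖ = a⁻¹ ∫ ‖ψ̂‖` and `∫ ‖ψ̂(b·)‖² = b⁻¹ ∫ ‖ψ̂‖²`.

For `‖g‖₂²`: near `0` the integrand of `σ_j²` is at least a multiple of `λ^{β-1} (aλ)^{2α}`, and
integrating this over `(0, ε / a]` gives `σ_j² ≥ c a^{-β}`; on the other hand
`∫ f_G² ‖ψ̂(a·)‖² ≤ M² a^{1-2β} ∫ |u|^{2β-2} ‖ψ̂(u)‖² du`. Hence `‖g‖₂² = O(a^{1-β})`, and the
whole expression is `O(a^{2-2β} a⁻¹ b⁻¹) = O(2^{j(1-2β)} 2^{-j₂(j)})`.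
-/

open Real Set

lemma integrable_comp_abs_of_integrableOn_Ioi {f : ℝ → ℝ} (hf : IntegrableOn f (Ioi 0)) :
    Integrable fun x => f |x| := by
  have h_Ioi : IntegrableOn (fun x => f |x|) (Ioi 0) :=
    hf.congr_fun (fun x hx => by rw [abs_of_pos hx]) measurableSet_Ioi
  have h_Iic : IntegrableOn (fun x => f |x|) (Iic 0) := by
    have hneg : MeasurableEmbedding fun x : ℝ => -x := (Homeomorph.neg ℝ).measurableEmbedding
    rw [← Measure.map_neg_eq_self (volume : Measure ℝ), hneg.integrableOn_map_iff]
    simp_rw [Function.comp_def, abs_neg, neg_preimage, neg_Iic, neg_zero]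
    exact (integrableOn_Ici_iff_integrableOn_Ioi).mpr h_Ioi
  simpa only [Iic_union_Ioi, integrableOn_univ] using h_Iic.union h_Ioi

lemma integrable_abs_rpow_mul_exp_neg_mul_abs {s c : ℝ} (hs : -1 < s) (hc : 0 < c) :
    Integrable fun x : ℝ => |x| ^ s * exp (-c * |x|) :=
  integrable_comp_abs_of_integrableOn_Ioi (f := fun x => x ^ s * exp (-c * x))
    (by simpa only [rpow_one] using integrableOn_rpow_mul_exp_neg_mul_rpow hs zero_lt_one hc)

lemma rpow_mul_exp_neg_mul_le {s c x : ℝ} (hs : 0 < s) (hc : 0 < c) (hx : 0 ≤ x) :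
    x ^ s * exp (-c * x) ≤ (s / c) ^ s := by
  have key : (c * x / s) ^ s ≤ exp (c * x) := by
    calc (c * x / s) ^ s ≤ exp (c * x / s) ^ s :=
          rpow_le_rpow (by positivity) ((lt_add_one _).le.trans (add_one_le_exp _)) hs.le
      _ = exp (c * x) := by rw [← exp_mul, div_mul_cancel₀ _ hs.ne']
  calc x ^ s * exp (-c * x) = (s / c) ^ s * ((c * x / s) ^ s * exp (-(c * x))) := by
        rw [← mul_assoc, ← mul_rpow (by positivity) (by positivity)]
        field_simp
    _ ≤ (s / c) ^ s * (exp (c * x) * exp (-(c * x))) := by gcongr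
    _ = (s / c) ^ s := by rw [← exp_add, add_neg_cancel, exp_zero, mul_one]

lemma integrable_of_abs_le_rpow_mul_exp {φ : ℝ → ℝ} {s c K : ℝ} (hφ : AEStronglyMeasurable φ)
    (hs : -1 < s) (hc : 0 < c) (hφ_le : ∀ᵐ u, |φ u| ≤ K * (|u| ^ s * exp (-c * |u|))) :
    Integrable φ :=
  ((integrable_abs_rpow_mul_exp_neg_mul_abs hs hc).const_mul K).mono' hφ hφ_le

lemma integrable_abs_rpow_mul_of_abs_le {φ : ℝ → ℝ} {γ s c K : ℝ} (hφ : AEStronglyMeasurable φ)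
    (hγs : -1 < γ + s) (hc : 0 < c) (hφ_le : ∀ u, |φ u| ≤ K * (|u| ^ s * exp (-c * |u|))) :
    Integrable fun u => |u| ^ γ * φ u := by
  refine integrable_of_abs_le_rpow_mul_exp (K := K)
    ((measurable_abs.pow_const γ).aestronglyMeasurable.mul hφ) hγs hc ?_
  filter_upwards [Measure.ae_ne volume 0] with u hu
  rw [abs_mul, abs_of_nonneg (by positivity), rpow_add (abs_pos.mpr hu)]
  calc |u| ^ γ * |φ u| ≤ |u| ^ γ * (K * (|u| ^ s * exp (-c * |u|))) := by gcongr; exact hφ_le u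
    _ = _ := by ring

lemma abs_rpow_eq_rpow_neg_mul_abs_mul_rpow {a : ℝ} (ha : 0 < a) (γ l : ℝ) :
    |l| ^ γ = a ^ (-γ) * |a * l| ^ γ := by
  rw [abs_mul, abs_of_pos ha, mul_rpow ha.le (abs_nonneg l), ← mul_assoc, ← rpow_add ha,
    neg_add_cancel, rpow_zero, one_mul]

lemma integrable_abs_rpow_mul_comp_mul {φ : ℝ → ℝ} {γ a : ℝ}
    (h : Integrable fun u => |u| ^ γ * φ u) (ha : 0 < a) :
    Integrable fun l => |l| ^ γ * φ (a * l) := by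
  convert (h.comp_mul_left' ha.ne').const_mul (a ^ (-γ)) using 2 with l
  rw [abs_rpow_eq_rpow_neg_mul_abs_mul_rpow ha γ l, mul_assoc]

lemma integral_abs_rpow_mul_comp_mul (φ : ℝ → ℝ) (γ : ℝ) {a : ℝ} (ha : 0 < a) :
    ∫ l, |l| ^ γ * φ (a * l) = a ^ (-1 - γ) * ∫ u, |u| ^ γ * φ u := by
  have hscale : (fun l => |l| ^ γ * φ (a * l)) = fun l => a ^ (-γ) * (|a * l| ^ γ * φ (a * l)) :=
    funext fun l => by rw [abs_rpow_eq_rpow_neg_mul_abs_mul_rpow ha γ l, mul_assoc]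
  rw [hscale, integral_const_mul, Measure.integral_comp_mul_left (fun u => |u| ^ γ * φ u) a,
    smul_eq_mul, abs_of_pos (inv_pos.mpr ha), ← mul_assoc, ← rpow_neg_one, ← rpow_add ha]
  ring_nf

lemma exists_half_mul_rpow_le {C g : ℝ → ℝ} {γ : ℝ} (hC : ContinuousAt C 0) (hC0 : 0 < C 0)
    (hg : ∀ x > 0, C x * x ^ γ ≤ g x) : ∃ δ > 0, ∀ x ∈ Ioc 0 δ, C 0 / 2 * x ^ γ ≤ g x := by
  obtain ⟨ε, hε, hCε⟩ :=
    Metric.eventually_nhds_iff.mp (hC.eventually (lt_mem_nhds (half_lt_self hC0)))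
  refine ⟨ε / 2, half_pos hε, fun x ⟨hx0, hxε⟩ => ?_⟩
  have hx : dist x 0 < ε := by rw [Real.dist_0_eq_abs, abs_of_pos hx0]; linarith
  exact (mul_le_mul_of_nonneg_right (hCε hx).le (by positivity)).trans (hg x hx0)

lemma sq_le_of_le_rpow_mul_exp {x u K α κ : ℝ} (hx : 0 ≤ x)
    (h : x ≤ K * (|u| ^ α * exp (-κ * |u|))) :
    x ^ 2 ≤ K ^ 2 * (|u| ^ (2 * α) * exp (-(2 * κ) * |u|)) := by
  calc x ^ 2 ≤ (K * (|u| ^ α * exp (-κ * |u|))) ^ 2 := pow_le_pow_left₀ hx h 2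
    _ = K ^ 2 * (|u| ^ (2 * α) * exp (-(2 * κ) * |u|)) := by
        rw [mul_pow, mul_pow, ← rpow_mul_natCast (abs_nonneg u), ← exp_nat_mul]
        ring_nf

section ScaledIntegrals

variable {f φ : ℝ → ℝ} {γ M a : ℝ}

lemma ae_abs_mul_comp_mul_le (hf_le : ∀ l ≠ 0, |f l| ≤ M * |l| ^ γ) (hφ0 : ∀ u, 0 ≤ φ u) :
    ∀ᵐ l, |f l * φ (a * l)| ≤ M * (|l| ^ γ * φ (a * l)) := by
  filter_upwards [Measure.ae_ne volume 0] with l hl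
  rw [abs_mul, abs_of_nonneg (hφ0 _), ← mul_assoc]
  exact mul_le_mul_of_nonneg_right (hf_le l hl) (hφ0 _)

lemma integrable_mul_comp_mul_of_abs_le (hf : AEStronglyMeasurable f)
    (hf_le : ∀ l ≠ 0, |f l| ≤ M * |l| ^ γ) (hφ : Continuous φ) (hφ0 : ∀ u, 0 ≤ φ u)
    (hφ_int : Integrable fun u => |u| ^ γ * φ u) (ha : 0 < a) :
    Integrable fun l => f l * φ (a * l) :=
  ((integrable_abs_rpow_mul_comp_mul hφ_int ha).const_mul M).mono'
    (hf.mul (hφ.comp (continuous_const_mul a)).aestronglyMeasurable)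
    (ae_abs_mul_comp_mul_le hf_le hφ0)

lemma integral_mul_comp_mul_le (hf : AEStronglyMeasurable f)
    (hf_le : ∀ l ≠ 0, |f l| ≤ M * |l| ^ γ) (hφ : Continuous φ) (hφ0 : ∀ u, 0 ≤ φ u)
    (hφ_int : Integrable fun u => |u| ^ γ * φ u) (ha : 0 < a) :
    ∫ l, f l * φ (a * l) ≤ M * a ^ (-1 - γ) * ∫ u, |u| ^ γ * φ u := by
  calc ∫ l, f l * φ (a * l) ≤ ∫ l, M * (|l| ^ γ * φ (a * l)) :=
        integral_mono_ae (integrable_mul_comp_mul_of_abs_le hf hf_le hφ hφ0 hφ_int ha)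
          ((integrable_abs_rpow_mul_comp_mul hφ_int ha).const_mul M)
          ((ae_abs_mul_comp_mul_le hf_le hφ0).mono fun l hl => (le_abs_self _).trans hl)
    _ = M * a ^ (-1 - γ) * ∫ u, |u| ^ γ * φ u := by
        rw [integral_const_mul, integral_abs_rpow_mul_comp_mul φ γ ha, mul_assoc]

/-- Only `(0, ε / a]` is used: there both lower bounds hold, and
`a ^ s * (ε / a) ^ (β + s) = ε ^ (β + s) * a ^ (-β)`. -/
lemma rpow_neg_le_integral_mul_comp_mul {β s c₀ r δ ε : ℝ} (hf0 : ∀ l, 0 ≤ f l)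
    (hφ0 : ∀ u, 0 ≤ φ u) (hint : Integrable fun l => f l * φ (a * l)) (hβs : 0 < β + s)
    (hr : 0 ≤ r) (hδ : 0 < δ) (hε : 0 < ε) (hf_ge : ∀ l ∈ Ioc 0 δ, c₀ * l ^ (β - 1) ≤ f l)
    (hφ_ge : ∀ u ∈ Ioc 0 ε, r * u ^ s ≤ φ u) (ha : ε / δ ≤ a) :
    c₀ * r * (ε ^ (β + s) / (β + s)) * a ^ (-β) ≤ ∫ l, f l * φ (a * l) := by
  have ha0 : 0 < a := (div_pos hε hδ).trans_le ha
  have hT : 0 < ε / a := div_pos hε ha0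
  have hTδ : ε / a ≤ δ := by
    rw [div_le_iff₀ ha0]; rwa [div_le_iff₀ hδ, mul_comm] at ha
  have hpow : ∀ l ∈ Ioc 0 (ε / a), c₀ * r * a ^ s * l ^ (β - 1 + s) ≤ f l * φ (a * l) := by
    rintro l ⟨hl0, hlT⟩
    have hal : a * l ∈ Ioc 0 ε := ⟨by positivity, by rwa [le_div_iff₀ ha0, mul_comm] at hlT⟩
    calc c₀ * r * a ^ s * l ^ (β - 1 + s) = c₀ * l ^ (β - 1) * (r * (a * l) ^ s) := by
          rw [rpow_add hl0, mul_rpow ha0.le hl0.le]; ring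
      _ ≤ f l * φ (a * l) :=
          mul_le_mul (hf_ge l ⟨hl0, hlT.trans hTδ⟩) (hφ_ge _ hal) (by positivity) (hf0 l)
  calc c₀ * r * (ε ^ (β + s) / (β + s)) * a ^ (-β)
      = ∫ l in Ioc 0 (ε / a), c₀ * r * a ^ s * l ^ (β - 1 + s) := by
        rw [← intervalIntegral.integral_of_le hT.le, intervalIntegral.integral_const_mul,
          integral_rpow (Or.inl (by linarith)), show β - 1 + s + 1 = β + s by ring,
          zero_rpow hβs.ne', div_rpow hε.le ha0.le, rpow_add ha0, rpow_neg ha0.le]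
        field_simp
        ring
    _ ≤ ∫ l in Ioc 0 (ε / a), f l * φ (a * l) :=
        setIntegral_mono_on
          ((intervalIntegral.intervalIntegrable_rpow' (by linarith)).1.const_mul _)
          hint.integrableOn measurableSet_Ioc hpow
    _ ≤ ∫ l, f l * φ (a * l) :=
        setIntegral_le_integral hint (ae_of_all _ fun l => mul_nonneg (hf0 l) (hφ0 _))

end ScaledIntegrals

lemma abs_le_mul_abs_rpow_of_eq {C f : ℝ → ℝ} {γ M : ℝ} (hC0 : ∀ x, 0 ≤ C x)
    (hCM : ∀ x, C x ≤ M) (hf : ∀ x ≠ 0, f x = C x * |x| ^ γ) (x : ℝ) (hx : x ≠ 0) :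
    |f x| ≤ M * |x| ^ γ := by
  rw [hf x hx, abs_mul, abs_of_nonneg (hC0 x), abs_of_nonneg (by positivity)]
  exact mul_le_mul_of_nonneg_right (hCM x) (by positivity)

section FourierDecay

variable {C : ℝ → ℂ} {p : ℝ → ℂ} {α κ K : ℝ}

lemma continuous_of_eq_mul_abs_rpow (hC : Continuous C) (hα : 0 ≤ α)
    (hp : ∀ u, p u = C u * ((|u| ^ α : ℝ) : ℂ)) : Continuous p := by
  rw [funext hp]
  exact hC.mul (Complex.continuous_ofReal.comp (continuous_abs.rpow_const fun _ => Or.inr hα))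

lemma norm_eq_of_eq_mul_abs_rpow (hp : ∀ u, p u = C u * ((|u| ^ α : ℝ) : ℂ)) (u : ℝ) :
    ‖p u‖ = ‖C u‖ * |u| ^ α := by
  rw [hp, norm_mul, Complex.norm_real, norm_of_nonneg (by positivity)]

lemma norm_le_of_eq_mul_abs_rpow (hC_le : ∀ u, ‖C u‖ ≤ K * exp (-κ * |u|))
    (hp : ∀ u, p u = C u * ((|u| ^ α : ℝ) : ℂ)) (u : ℝ) :
    ‖p u‖ ≤ K * (|u| ^ α * exp (-κ * |u|)) := by
  rw [norm_eq_of_eq_mul_abs_rpow hp, ← mul_assoc, mul_comm K, mul_assoc, mul_comm]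
  exact mul_le_mul_of_nonneg_left (hC_le u) (by positivity)

lemma exists_half_mul_rpow_le_norm_sq (hC : Continuous C) (hC0 : C 0 ≠ 0)
    (hp : ∀ u, p u = C u * ((|u| ^ α : ℝ) : ℂ)) :
    ∃ ε > 0, ∀ u ∈ Ioc 0 ε, ‖C 0‖ ^ 2 / 2 * u ^ (2 * α) ≤ ‖p u‖ ^ 2 :=
  exists_half_mul_rpow_le (C := fun u => ‖C u‖ ^ 2) (hC.norm.pow 2).continuousAt
    (by positivity) fun u hu => le_of_eq <| by
      rw [norm_eq_of_eq_mul_abs_rpow hp, abs_of_pos hu, mul_pow, ← rpow_mul_natCast hu.le]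
      ring_nf

lemma norm_le_of_norm_le_rpow_mul_exp (hα : 0 < α) (hκ : 0 < κ) (hK : 0 ≤ K)
    (hp_le : ∀ u, ‖p u‖ ≤ K * (|u| ^ α * exp (-κ * |u|))) (u : ℝ) :
    ‖p u‖ ≤ K * (α / κ) ^ α :=
  (hp_le u).trans (mul_le_mul_of_nonneg_left (rpow_mul_exp_neg_mul_le hα hκ (abs_nonneg u)) hK)

lemma integrable_norm_of_norm_le_rpow_mul_exp (hp : Continuous p) (hα : -1 < α) (hκ : 0 < κ)
    (hp_le : ∀ u, ‖p u‖ ≤ K * (|u| ^ α * exp (-κ * |u|))) :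
    Integrable fun u => ‖p u‖ :=
  integrable_of_abs_le_rpow_mul_exp hp.norm.aestronglyMeasurable hα hκ
    (ae_of_all _ fun u => (abs_norm _).trans_le (hp_le u))

lemma integrable_norm_sq_of_norm_le_rpow_mul_exp (hp : Continuous p) (hα : -1 < 2 * α)
    (hκ : 0 < κ) (hp_le : ∀ u, ‖p u‖ ≤ K * (|u| ^ α * exp (-κ * |u|))) :
    Integrable fun u => ‖p u‖ ^ 2 :=
  integrable_of_abs_le_rpow_mul_exp (hp.norm.pow 2).aestronglyMeasurable hα (by positivity)
    (ae_of_all _ fun u => (abs_of_nonneg (by positivity)).trans_le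
      (sq_le_of_le_rpow_mul_exp (norm_nonneg _) (hp_le u)))

end FourierDecay

lemma norm_convC_self_le {g : ℝ → ℂ} (hg : Integrable fun x => ‖g x‖ ^ 2) (x : ℝ) :
    ‖convC g g x‖ ≤ ∫ y, ‖g y‖ ^ 2 := by
  have hshift : Integrable fun y => ‖g (x - y)‖ ^ 2 := hg.comp_sub_left x
  calc ‖convC g g x‖ ≤ ∫ y, ‖g (x - y) * g y‖ := norm_integral_le_integral_norm _
    _ ≤ ∫ y, (‖g (x - y)‖ ^ 2 + ‖g y‖ ^ 2) / 2 := by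
        refine integral_mono_of_nonneg (ae_of_all _ fun y => norm_nonneg _)
          ((hshift.add hg).div_const 2) (ae_of_all _ fun y => ?_)
        dsimp only
        rw [norm_mul]
        nlinarith [sq_nonneg (‖g (x - y)‖ - ‖g y‖)]
    _ = ∫ y, ‖g y‖ ^ 2 := by
        rw [integral_div, integral_add hshift hg,
          integral_sub_left_eq_self (fun y => ‖g y‖ ^ 2) volume x]
        ring

lemma norm_integral_integral_le {p v : ℝ → ℂ} {B Q a b : ℝ}
    (hp₁ : Integrable fun u => ‖p u‖) (hp₂ : Integrable fun u => ‖p u‖ ^ 2)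
    (hpB : ∀ u, ‖p u‖ ≤ B) (hvQ : ∀ x, ‖v x‖ ≤ Q) (ha : 0 < a) (hb : 0 < b) :
    ‖∫ l₁, ∫ l₂, ((‖p (b * l₂)‖ ^ 2 : ℝ) : ℂ) * p (a * l₁) * p (a * (l₁ - l₂)) *
        v l₁ * v (l₁ - l₂)‖
      ≤ B * Q ^ 2 * (a⁻¹ * ∫ u, ‖p u‖) * (b⁻¹ * ∫ u, ‖p u‖ ^ 2) := by
  have hB : 0 ≤ B := (norm_nonneg _).trans (hpB 0)
  have hQ : 0 ≤ Q := (norm_nonneg _).trans (hvQ 0)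
  have hpointwise : ∀ l₁ l₂, ‖((‖p (b * l₂)‖ ^ 2 : ℝ) : ℂ) * p (a * l₁) * p (a * (l₁ - l₂)) *
      v l₁ * v (l₁ - l₂)‖ ≤ ‖p (b * l₂)‖ ^ 2 * (B * Q ^ 2 * ‖p (a * l₁)‖) := by
    intro l₁ l₂
    simp only [norm_mul, Complex.norm_real, norm_pow, norm_norm]
    have hfactors := mul_le_mul (mul_le_mul (hpB (a * (l₁ - l₂))) (hvQ l₁) (norm_nonneg _) hB)
      (hvQ (l₁ - l₂)) (norm_nonneg _) (mul_nonneg hB hQ)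
    calc _ = ‖p (b * l₂)‖ ^ 2 * ‖p (a * l₁)‖ *
          (‖p (a * (l₁ - l₂))‖ * ‖v l₁‖ * ‖v (l₁ - l₂)‖) := by ring
      _ ≤ ‖p (b * l₂)‖ ^ 2 * ‖p (a * l₁)‖ * (B * Q * Q) :=
          mul_le_mul_of_nonneg_left hfactors (by positivity)
      _ = _ := by ring
  have hinner : ∀ l₁, ‖∫ l₂, ((‖p (b * l₂)‖ ^ 2 : ℝ) : ℂ) * p (a * l₁) * p (a * (l₁ - l₂)) *
      v l₁ * v (l₁ - l₂)‖ ≤ (b⁻¹ * ∫ u, ‖p u‖ ^ 2) * (B * Q ^ 2 * ‖p (a * l₁)‖) := by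
    intro l₁
    have hscale : ∫ l₂, ‖p (b * l₂)‖ ^ 2 = b⁻¹ * ∫ u, ‖p u‖ ^ 2 := by
      rw [Measure.integral_comp_mul_left (fun u => ‖p u‖ ^ 2) b, smul_eq_mul,
        abs_of_pos (inv_pos.mpr hb)]
    refine (norm_integral_le_integral_norm _).trans ?_
    rw [← hscale, ← integral_mul_const]
    exact integral_mono_of_nonneg (ae_of_all _ fun _ => norm_nonneg _)
      ((hp₂.comp_mul_left' hb.ne').mul_const _) (ae_of_all _ (hpointwise l₁))
  refine (norm_integral_le_integral_norm _).trans ?_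
  calc _ ≤ ∫ l₁, (b⁻¹ * ∫ u, ‖p u‖ ^ 2) * (B * Q ^ 2 * ‖p (a * l₁)‖) :=
        integral_mono_of_nonneg (ae_of_all _ fun _ => norm_nonneg _)
          (((hp₁.comp_mul_left' ha.ne').const_mul _).const_mul _) (ae_of_all _ hinner)
    _ = _ := by
        rw [integral_const_mul, integral_const_mul,
          Measure.integral_comp_mul_left (fun u => ‖p u‖) a, smul_eq_mul,
          abs_of_pos (inv_pos.mpr ha)]
        ring

lemma rpow_one_sub_two_mul_eq {a : ℝ} (ha : 0 < a) (β : ℝ) :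
    a ^ (1 - 2 * β) = (a ^ (1 - β)) ^ 2 * a⁻¹ := by
  rw [← rpow_natCast, ← rpow_mul ha.le, ← rpow_neg_one, ← rpow_add ha]
  ring_nf

/-- With `a = 2 ^ j` these are the paper's `σ_j²` and `f_{c,j}`. -/
noncomputable def scaledVariance (f : ℝ → ℝ) (p : ℝ → ℂ) (a : ℝ) : ℝ :=
  ∫ l, f l * ‖p (a * l)‖ ^ 2

noncomputable def normalizedSpectrum (f : ℝ → ℝ) (p : ℝ → ℂ) (a l : ℝ) : ℂ :=
  (((√(scaledVariance f p a))⁻¹ * f l : ℝ) : ℂ) * starRingEnd ℂ (p (a * l))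

lemma norm_normalizedSpectrum_sq {f : ℝ → ℝ} {p : ℝ → ℂ} {a : ℝ}
    (hσ : 0 ≤ scaledVariance f p a) (l : ℝ) :
    ‖normalizedSpectrum f p a l‖ ^ 2 = (scaledVariance f p a)⁻¹ * (f l ^ 2 * ‖p (a * l)‖ ^ 2) := by
  rw [normalizedSpectrum, norm_mul, Complex.norm_real, Complex.norm_conj, Real.norm_eq_abs,
    mul_pow, sq_abs, mul_pow, inv_pow, sq_sqrt hσ]
  ring

theorem exists_integral_norm_normalizedSpectrum_sq_le {f : ℝ → ℝ} {p : ℝ → ℂ}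
    {α β κ K M c₀ δ r ε : ℝ} (hβα : 0 < β + 2 * α) (hβα' : -1 < 2 * β - 2 + 2 * α)
    (hf : AEStronglyMeasurable f) (hf0 : ∀ l, 0 ≤ f l)
    (hf_le : ∀ l ≠ 0, |f l| ≤ M * |l| ^ (β - 1)) (hc₀ : 0 < c₀) (hδ : 0 < δ)
    (hf_ge : ∀ l ∈ Ioc 0 δ, c₀ * l ^ (β - 1) ≤ f l) (hp : Continuous p) (hκ : 0 < κ)
    (hp_le : ∀ u, ‖p u‖ ≤ K * (|u| ^ α * exp (-κ * |u|))) (hr : 0 < r) (hε : 0 < ε)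
    (hp_ge : ∀ u ∈ Ioc 0 ε, r * u ^ (2 * α) ≤ ‖p u‖ ^ 2) :
    ∃ D, ∀ a ≥ ε / δ, Integrable (fun l => ‖normalizedSpectrum f p a l‖ ^ 2) ∧
      ∫ l, ‖normalizedSpectrum f p a l‖ ^ 2 ≤ D * a ^ (1 - β) := by
  set φ : ℝ → ℝ := fun u => ‖p u‖ ^ 2
  have hφ : Continuous φ := hp.norm.pow 2
  have hφ0 : ∀ u, 0 ≤ φ u := fun u => by positivity
  have hφ_int : ∀ γ, -1 < γ + 2 * α → Integrable fun u => |u| ^ γ * φ u := fun γ hγ =>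
    integrable_abs_rpow_mul_of_abs_le hφ.aestronglyMeasurable hγ (by positivity) fun u =>
      (abs_of_nonneg (hφ0 u)).trans_le (sq_le_of_le_rpow_mul_exp (norm_nonneg _) (hp_le u))
  have hf2_le : ∀ l ≠ 0, |f l ^ 2| ≤ M ^ 2 * |l| ^ (2 * β - 2) := fun l hl => by
    rw [abs_pow, show 2 * β - 2 = (β - 1) * (2 : ℕ) by push_cast; ring,
      rpow_mul_natCast (abs_nonneg l), ← mul_pow]
    exact pow_le_pow_left₀ (abs_nonneg _) (hf_le l hl) 2
  set c := c₀ * r * (ε ^ (β + 2 * α) / (β + 2 * α))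
  refine ⟨c⁻¹ * M ^ 2 * ∫ u, |u| ^ (2 * β - 2) * φ u, fun a ha => ?_⟩
  have ha0 : 0 < a := (div_pos hε hδ).trans_le ha
  have hσ : c * a ^ (-β) ≤ scaledVariance f p a :=
    rpow_neg_le_integral_mul_comp_mul hf0 hφ0
      (integrable_mul_comp_mul_of_abs_le hf hf_le hφ hφ0 (hφ_int _ (by linarith)) ha0)
      hβα hr.le hδ hε hf_ge hp_ge ha
  have hc : 0 < c * a ^ (-β) := by positivity
  have hsq := norm_normalizedSpectrum_sq (hc.le.trans hσ)
  have hint := integrable_mul_comp_mul_of_abs_le (hf.pow 2) hf2_le hφ hφ0 (hφ_int _ hβα') ha0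
  refine ⟨(hint.const_mul _).congr (ae_of_all _ fun l => (hsq l).symm), ?_⟩
  simp_rw [hsq]
  rw [integral_const_mul]
  calc _ ≤ (c * a ^ (-β))⁻¹ *
        (M ^ 2 * a ^ (-1 - (2 * β - 2)) * ∫ u, |u| ^ (2 * β - 2) * φ u) :=
        mul_le_mul (inv_anti₀ hc hσ)
          (integral_mul_comp_mul_le (hf.pow 2) hf2_le hφ hφ0 (hφ_int _ hβα') ha0)
          (integral_nonneg fun l => mul_nonneg (sq_nonneg _) (hφ0 _)) (inv_nonneg.mpr hc.le)
    _ = _ := by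
        rw [mul_inv, ← rpow_neg ha0.le, neg_neg]
        have : a ^ β * a ^ (-1 - (2 * β - 2)) = a ^ (1 - β) := by
          rw [← rpow_add ha0]; ring_nf
        linear_combination (c⁻¹ * M ^ 2 * ∫ u, |u| ^ (2 * β - 2) * φ u) * this

theorem stmt_19_general
    (β : ℝ) (hβ : β ∈ Set.Ioo (0 : ℝ) 1)
    (C_G : ℝ → ℝ) (hCG_cont : Continuous C_G) (hCG_bdd : ∃ M : ℝ, ∀ x, C_G x ≤ M)
    (hCG_nonneg : ∀ x, 0 ≤ C_G x)
    (hCG0 : 0 < C_G 0)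
    (f_G : ℝ → ℝ) (hfG_nonneg : ∀ x, 0 ≤ f_G x)
    (hfG : ∀ x : ℝ, x ≠ 0 → f_G x = C_G x * |x| ^ (β - 1))
    (hfG_int : Integrable f_G)
    (ψ : ℝ → ℝ)
    (α K κ : ℝ) (hα : 1 ≤ α) (hK : 0 < K) (hκ : 0 < κ)
    (Cψ : ℝ → ℂ) (hCψ_cont : Continuous Cψ)
    (hCψ0 : 0 < (Cψ 0).re ∧ (Cψ 0).im = 0)
    (hCψ_bdd : ∀ l : ℝ, Norm.norm (Cψ l) ≤ K * Real.exp (-κ * |l|))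
    (hhat : ∀ l : ℝ, fhat ψ l = Cψ l * ((|l| ^ α : ℝ) : ℂ))
    (sigma2 : ℕ → ℝ)
    (hsigma2 : ∀ j : ℕ, sigma2 j =
      ∫ l : ℝ, f_G l * Norm.norm (fhat ψ ((2 : ℝ) ^ j * l)) ^ 2)
    (fc : ℕ → ℝ → ℂ)
    (hfc : ∀ j : ℕ, ∀ l : ℝ,
      fc j l = ((((Real.sqrt (sigma2 j))⁻¹ * f_G l : ℝ)) : ℂ) *
        (starRingEnd ℂ) (fhat ψ ((2 : ℝ) ^ j * l)))
    (j₂ : ℕ → ℕ) :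
    ∃ Cst > (0 : ℝ), ∃ J : ℕ, ∀ j ≥ J,
      Norm.norm
        (∫ l₁ : ℝ, ∫ l₂ : ℝ,
          ((Norm.norm (fhat ψ ((2 : ℝ) ^ (j₂ j) * l₂)) ^ 2 : ℝ) : ℂ) *
            fhat ψ ((2 : ℝ) ^ j * l₁) * fhat ψ ((2 : ℝ) ^ j * (l₁ - l₂)) *
            convC (fc j) (fc j) l₁ * convC (fc j) (fc j) (l₁ - l₂))
      ≤ Cst * ((2 : ℝ) ^ ((j : ℝ) * (1 - 2 * β)) * (2 : ℝ) ^ (-(j₂ j : ℝ))) := by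
  obtain ⟨M, hM⟩ := hCG_bdd
  have hα0 : 0 < α := by linarith
  have hp := continuous_of_eq_mul_abs_rpow hCψ_cont hα0.le hhat
  have hp_le := norm_le_of_eq_mul_abs_rpow hCψ_bdd hhat
  obtain ⟨δ, hδ, hfG_ge⟩ := exists_half_mul_rpow_le (g := f_G) (γ := β - 1)
    hCG_cont.continuousAt hCG0 fun l hl => by rw [hfG l hl.ne', abs_of_pos hl]
  have hCψ0_ne : Cψ 0 ≠ 0 := fun h => by simp [h] at hCψ0
  obtain ⟨ε, hε, hp_ge⟩ := exists_half_mul_rpow_le_norm_sq hCψ_cont hCψ0_ne hhat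
  obtain ⟨D, hD⟩ := exists_integral_norm_normalizedSpectrum_sq_le (by linarith [hβ.1])
    (by linarith [hβ.1]) hfG_int.aestronglyMeasurable hfG_nonneg
    (abs_le_mul_abs_rpow_of_eq hCG_nonneg hM hfG) (by positivity) hδ hfG_ge hp hκ hp_le
    (by positivity) hε hp_ge
  obtain ⟨J, hJ⟩ := pow_unbounded_of_one_lt (ε / δ) one_lt_two
  set I₁ := ∫ u, ‖fhat ψ u‖
  set I₂ := ∫ u, ‖fhat ψ u‖ ^ 2
  refine ⟨K * (α / κ) ^ α * D ^ 2 * I₁ * I₂ + 1, by positivity, J, fun j hj => ?_⟩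
  have hfc_eq : fc j = normalizedSpectrum f_G (fhat ψ) (2 ^ j) :=
    funext fun l => by rw [hfc, hsigma2]; rfl
  obtain ⟨hint, hle⟩ := hD (2 ^ j) (hJ.le.trans (pow_le_pow_right₀ one_le_two hj))
  calc _ ≤ K * (α / κ) ^ α * (D * ((2 : ℝ) ^ j) ^ (1 - β)) ^ 2 *
        (((2 : ℝ) ^ j)⁻¹ * I₁) * (((2 : ℝ) ^ j₂ j)⁻¹ * I₂) :=
        norm_integral_integral_le
          (integrable_norm_of_norm_le_rpow_mul_exp hp (by linarith) hκ hp_le)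
          (integrable_norm_sq_of_norm_le_rpow_mul_exp hp (by linarith) hκ hp_le)
          (norm_le_of_norm_le_rpow_mul_exp hα0 hκ hK.le hp_le)
          (fun x => hfc_eq ▸ (norm_convC_self_le hint x).trans hle) (by positivity) (by positivity)
    _ = K * (α / κ) ^ α * D ^ 2 * I₁ * I₂ * (((2 : ℝ) ^ j) ^ (1 - 2 * β) * ((2 : ℝ) ^ j₂ j)⁻¹) := by
        rw [rpow_one_sub_two_mul_eq (by positivity)]; ring
    _ ≤ _ := by
        rw [rpow_mul zero_le_two, rpow_neg zero_le_two, rpow_natCast, rpow_natCast]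
        gcongr
        linarith

theorem stmt_19
    (β : ℝ) (hβ : β ∈ Set.Ioo (0 : ℝ) 1)
    (C_G : ℝ → ℝ) (hCG_cont : Continuous C_G) (hCG_bdd : ∃ M : ℝ, ∀ x, C_G x ≤ M)
    (hCG_nonneg : ∀ x, 0 ≤ C_G x) (hCG_even : ∀ x, C_G (-x) = C_G x)
    (hCG0 : 0 < C_G 0)
    (f_G : ℝ → ℝ) (hfG_nonneg : ∀ x, 0 ≤ f_G x)
    (hfG : ∀ x : ℝ, x ≠ 0 → f_G x = C_G x * |x| ^ (β - 1))
    (hfG_int : Integrable f_G)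
    (ψ : ℝ → ℝ) (hψ_int : Integrable ψ) (hψ_sq : Integrable (fun t => (ψ t) ^ 2))
    (hψ_zero : (∫ t : ℝ, ψ t) = 0)
    (α K κ : ℝ) (hα : 1 ≤ α) (hK : 0 < K) (hκ : 0 < κ)
    (Cψ : ℝ → ℂ) (hCψ_cont : Continuous Cψ)
    (hCψ0 : 0 < (Cψ 0).re ∧ (Cψ 0).im = 0)
    (hCψ_bdd : ∀ l : ℝ, Norm.norm (Cψ l) ≤ K * Real.exp (-κ * |l|))
    (hhat : ∀ l : ℝ, fhat ψ l = Cψ l * ((|l| ^ α : ℝ) : ℂ))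
    (sigma2 : ℕ → ℝ)
    (hsigma2 : ∀ j : ℕ, sigma2 j =
      ∫ l : ℝ, f_G l * Norm.norm (fhat ψ ((2 : ℝ) ^ j * l)) ^ 2)
    (fc : ℕ → ℝ → ℂ)
    (hfc : ∀ j : ℕ, ∀ l : ℝ,
      fc j l = ((((Real.sqrt (sigma2 j))⁻¹ * f_G l : ℝ)) : ℂ) *
        (starRingEnd ℂ) (fhat ψ ((2 : ℝ) ^ j * l)))
    (j₂ : ℕ → ℕ)
    (hj₂ : 1 < Filter.liminf (fun j : ℕ => (j₂ j : ℝ) / (j : ℝ)) atTop) :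
    ∃ Cst > (0 : ℝ), ∃ J : ℕ, ∀ j ≥ J,
      Norm.norm
        (∫ l₁ : ℝ, ∫ l₂ : ℝ,
          ((Norm.norm (fhat ψ ((2 : ℝ) ^ (j₂ j) * l₂)) ^ 2 : ℝ) : ℂ) *
            fhat ψ ((2 : ℝ) ^ j * l₁) * fhat ψ ((2 : ℝ) ^ j * (l₁ - l₂)) *
            convC (fc j) (fc j) l₁ * convC (fc j) (fc j) (l₁ - l₂))
      ≤ Cst * ((2 : ℝ) ^ ((j : ℝ) * (1 - 2 * β)) * (2 : ℝ) ^ (-(j₂ j : ℝ))) :=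
  stmt_19_general β hβ C_G hCG_cont hCG_bdd hCG_nonneg hCG0 f_G hfG_nonneg hfG hfG_int ψ α K κ hα hK
    hκ Cψ hCψ_cont hCψ0 hCψ_bdd hhat sigma2 hsigma2 fc hfc j₂
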